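/- (Two-variable difference equations.) For every integer n ≥ 1 and all x, y ∈ ℂ: (i) Σ_{k=0}^{n} [n choose k]_q ((−1;q)_{n−k}/2^{n−k}) B_{k,q}(x,y) − B_{n,q}(x,y) = [n]_q (x ⊕_q y)^{n−1}; (ii) Σ_{k=0}^{n} [n choose k]_q ((−1;q)_{n−k}/2^{n−k}) E_{k,q}(x,y) + E_{n,q}(x,y) = 2 (x ⊕_q y)^n; (iii) Σ_{k=0}^{n} [n choose k]_q ((−1;q)_{n−k}/2^{n−k}) G_{k,q}(x,y) + G_{n,q}(x,y) = 2 [n]_q (x ⊕_q y)^{n−1}. -/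

import Mathlib

open Finset PowerSeries

/-- The `q`-number `[n]_q = (1 - q^n)/(1 - q)`. -/
noncomputable def qNum (q : ℂ) (n : ℕ) : ℂ := (1 - q ^ n) / (1 - q)

/-- The `q`-factorial `[n]_q!`. -/
noncomputable def qFact (q : ℂ) : ℕ → ℂ
  | 0 => 1
  | n + 1 => qNum q (n + 1) * qFact q n

/-- The `q`-shifted factorial `(a; q)_n = ∏_{j=0}^{n-1} (1 - q^j a)`. -/
noncomputable def qShift (a q : ℂ) (n : ℕ) : ℂ := ∏ j ∈ Finset.range n, (1 - q ^ j * a)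

/-- The Gaussian binomial coefficient `[n choose k]_q = (q;q)_n / ((q;q)_{n-k} (q;q)_k)`. -/
noncomputable def qBinom (q : ℂ) (n k : ℕ) : ℂ :=
  qShift q q n / (qShift q q (n - k) * qShift q q k)

/-- The formal power series (in `t`) `𝓔_q(tx) = Σ_{n≥0} (-1;q)_n (x)^n t^n / (2^n [n]_q!)`. -/
noncomputable def qExp (q x : ℂ) : PowerSeries ℂ :=
  PowerSeries.mk fun n => qShift (-1) q n * x ^ n / (2 ^ n * qFact q n)

/-- The generating series `Σ_{n≥0} a_n t^n / [n]_q!` of a sequence `a`. -/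
noncomputable def qGen (q : ℂ) (a : ℕ → ℂ) : PowerSeries ℂ :=
  PowerSeries.mk fun n => a n / qFact q n

/-- The `q`-addition `(x ⊕_q y)^n`. -/
noncomputable def qAdd (q x y : ℂ) (n : ℕ) : ℂ :=
  ∑ k ∈ Finset.range (n + 1),
    qBinom q n k * (qShift (-1) q k * qShift (-1) q (n - k) / 2 ^ n) * x ^ k * y ^ (n - k)

/-! The three generating functions are products of `q`-exponential series, and multiplying
generating series `Σ aₙ tⁿ / [n]_q!` convolves their coefficients with `q`-binomial weights.
Rewriting both sides of each defining identity as a single generating series and comparing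
coefficients gives the three equations; the factor `t` shifts the index and contributes `[n]_q`. -/

section QSeries

variable {q : ℂ}

lemma one_sub_pow_succ_ne_zero (hq1 : ‖q‖ < 1) (m : ℕ) : (1 : ℂ) - q ^ (m + 1) ≠ 0 := by
  rw [sub_ne_zero]
  intro h
  have : ‖q ^ (m + 1)‖ < 1 := by
    rw [norm_pow]
    exact pow_lt_one₀ (norm_nonneg q) hq1 m.succ_ne_zero
  simp [← h] at this

lemma one_sub_ne_zero_of_norm_lt_one (hq1 : ‖q‖ < 1) : (1 : ℂ) - q ≠ 0 := by
  simpa using one_sub_pow_succ_ne_zero hq1 0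

lemma qNum_succ_ne_zero (hq1 : ‖q‖ < 1) (m : ℕ) : qNum q (m + 1) ≠ 0 :=
  div_ne_zero (one_sub_pow_succ_ne_zero hq1 m) (one_sub_ne_zero_of_norm_lt_one hq1)

lemma qFact_ne_zero (hq1 : ‖q‖ < 1) : ∀ n, qFact q n ≠ 0
  | 0 => one_ne_zero
  | n + 1 => mul_ne_zero (qNum_succ_ne_zero hq1 n) (qFact_ne_zero hq1 n)

lemma qShift_self (hq : (1 : ℂ) - q ≠ 0) (n : ℕ) : qShift q q n = (1 - q) ^ n * qFact q n := by
  induction n with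
  | zero => simp [qShift, qFact]
  | succ m ih =>
    rw [qShift, prod_range_succ, ← qShift, ih, qFact, qNum]
    field_simp
    ring

lemma qBinom_eq_qFact_div (hq : (1 : ℂ) - q ≠ 0) {n k : ℕ} (hk : k ≤ n) :
    qBinom q n k = qFact q n / (qFact q k * qFact q (n - k)) := by
  rw [qBinom, qShift_self hq, qShift_self hq, qShift_self hq, ← Nat.sub_add_cancel hk, pow_add,
    Nat.add_sub_cancel]
  rw [show (1 - q) ^ (n - k) * qFact q (n - k) * ((1 - q) ^ k * qFact q k) =
      (1 - q) ^ (n - k) * (1 - q) ^ k * (qFact q k * qFact q (n - k)) by ring]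
  exact mul_div_mul_left _ _ (mul_ne_zero (pow_ne_zero _ hq) (pow_ne_zero _ hq))

lemma coeff_qGen (a : ℕ → ℂ) (n : ℕ) : coeff n (qGen q a) = a n / qFact q n :=
  coeff_mk _ _

lemma qGen_injective (hq1 : ‖q‖ < 1) : Function.Injective (qGen q) := by
  intro a b hab
  funext n
  have h := congrArg (coeff n) hab
  rwa [coeff_qGen, coeff_qGen, div_left_inj' (qFact_ne_zero hq1 n)] at h

lemma qGen_add (a b : ℕ → ℂ) : qGen q a + qGen q b = qGen q (a + b) := by
  ext n
  simp [coeff_qGen, add_div]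

lemma qGen_sub (a b : ℕ → ℂ) : qGen q a - qGen q b = qGen q (a - b) := by
  ext n
  simp [coeff_qGen, sub_div]

lemma two_mul_qGen (a : ℕ → ℂ) : 2 * qGen q a = qGen q (2 * a) := by
  ext n
  rw [← map_ofNat C 2, coeff_C_mul, coeff_qGen, coeff_qGen, Pi.mul_apply, Pi.ofNat_apply,
    mul_div_assoc]

lemma qExp_eq_qGen (x : ℂ) : qExp q x = qGen q (fun n => qShift (-1) q n * x ^ n / 2 ^ n) := by
  ext n
  simp [qExp, coeff_qGen, div_div]

lemma qGen_mul_qGen (hq1 : ‖q‖ < 1) (a b : ℕ → ℂ) :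
    qGen q a * qGen q b =
      qGen q (fun n => ∑ k ∈ range (n + 1), qBinom q n k * a k * b (n - k)) := by
  ext n
  rw [coeff_mul, Nat.sum_antidiagonal_eq_sum_range_succ_mk, coeff_qGen, sum_div]
  refine sum_congr rfl fun k hk => ?_
  rw [coeff_qGen, coeff_qGen,
    qBinom_eq_qFact_div (one_sub_ne_zero_of_norm_lt_one hq1) (mem_range_succ_iff.mp hk)]
  field_simp [qFact_ne_zero hq1]

lemma X_mul_qGen (hq1 : ‖q‖ < 1) (a : ℕ → ℂ) :
    X * qGen q a = qGen q (fun n => qNum q n * a (n - 1)) := by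
  ext n
  rcases n with _ | m
  · simp [coeff_qGen, qNum]
  · rw [coeff_succ_X_mul, coeff_qGen, coeff_qGen, qFact, Nat.add_sub_cancel,
      mul_div_mul_left _ _ (qNum_succ_ne_zero hq1 m)]

lemma qExp_mul_qExp (hq1 : ‖q‖ < 1) (x y : ℂ) : qExp q x * qExp q y = qGen q (qAdd q x y) := by
  rw [qExp_eq_qGen, qExp_eq_qGen, qGen_mul_qGen hq1]
  congr 1
  funext n
  refine sum_congr rfl fun k hk => ?_
  rw [← Nat.add_sub_cancel' (mem_range_succ_iff.mp hk), pow_add, Nat.add_sub_cancel_left]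
  field_simp

lemma qGen_mul_qExp_one (hq1 : ‖q‖ < 1) (a : ℕ → ℂ) :
    qGen q a * qExp q 1 = qGen q (fun n => ∑ k ∈ range (n + 1),
      qBinom q n k * (qShift (-1) q (n - k) / 2 ^ (n - k)) * a k) := by
  rw [qExp_eq_qGen, qGen_mul_qGen hq1]
  congr 1
  funext n
  refine sum_congr rfl fun k _ => ?_
  rw [one_pow]
  ring

end QSeries

theorem two_variable_difference_equations_general (q : ℂ)
    (hq1 : ‖q‖ < 1)
    (B E G : ℂ → ℂ → ℕ → ℂ)
    (hB : ∀ x y : ℂ, qGen q (B x y) * (qExp q 1 - 1) = PowerSeries.X * qExp q x * qExp q y)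
    (hE : ∀ x y : ℂ, qGen q (E x y) * (qExp q 1 + 1) = 2 * qExp q x * qExp q y)
    (hG : ∀ x y : ℂ, qGen q (G x y) * (qExp q 1 + 1) = 2 * PowerSeries.X * qExp q x * qExp q y)
    (n : ℕ) (x y : ℂ) :
    ((∑ k ∈ Finset.range (n + 1),
        qBinom q n k * (qShift (-1) q (n - k) / 2 ^ (n - k)) * B x y k) - B x y n
      = qNum q n * qAdd q x y (n - 1)) ∧
    ((∑ k ∈ Finset.range (n + 1),
        qBinom q n k * (qShift (-1) q (n - k) / 2 ^ (n - k)) * E x y k) + E x y n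
      = 2 * qAdd q x y n) ∧
    ((∑ k ∈ Finset.range (n + 1),
        qBinom q n k * (qShift (-1) q (n - k) / 2 ^ (n - k)) * G x y k) + G x y n
      = 2 * qNum q n * qAdd q x y (n - 1)) := by
  have hB' := hB x y
  have hE' := hE x y
  have hG' := hG x y
  rw [mul_sub, mul_one, qGen_mul_qExp_one hq1, qGen_sub, mul_assoc, qExp_mul_qExp hq1,
    X_mul_qGen hq1] at hB'
  rw [mul_add, mul_one, qGen_mul_qExp_one hq1, qGen_add, mul_assoc, qExp_mul_qExp hq1,
    two_mul_qGen] at hE'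
  rw [mul_add, mul_one, qGen_mul_qExp_one hq1, qGen_add, mul_assoc, mul_assoc,
    qExp_mul_qExp hq1, X_mul_qGen hq1, two_mul_qGen] at hG'
  refine ⟨congrFun (qGen_injective hq1 hB') n, congrFun (qGen_injective hq1 hE') n, ?_⟩
  rw [mul_assoc]
  exact congrFun (qGen_injective hq1 hG') n

/-- Two-variable difference equations for the `q`-Bernoulli, `q`-Euler and `q`-Genocchi
polynomials. -/
theorem two_variable_difference_equations (q : ℂ)
    (hq0 : 0 < ‖q‖) (hq1 : ‖q‖ < 1)
    (B E G : ℂ → ℂ → ℕ → ℂ)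
    (hB : ∀ x y : ℂ, qGen q (B x y) * (qExp q 1 - 1) = PowerSeries.X * qExp q x * qExp q y)
    (hE : ∀ x y : ℂ, qGen q (E x y) * (qExp q 1 + 1) = 2 * qExp q x * qExp q y)
    (hG : ∀ x y : ℂ, qGen q (G x y) * (qExp q 1 + 1) = 2 * PowerSeries.X * qExp q x * qExp q y)
    (n : ℕ) (hn : 1 ≤ n) (x y : ℂ) :
    ((∑ k ∈ Finset.range (n + 1),
        qBinom q n k * (qShift (-1) q (n - k) / 2 ^ (n - k)) * B x y k) - B x y n
      = qNum q n * qAdd q x y (n - 1)) ∧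
    ((∑ k ∈ Finset.range (n + 1),
        qBinom q n k * (qShift (-1) q (n - k) / 2 ^ (n - k)) * E x y k) + E x y n
      = 2 * qAdd q x y n) ∧
    ((∑ k ∈ Finset.range (n + 1),
        qBinom q n k * (qShift (-1) q (n - k) / 2 ^ (n - k)) * G x y k) + G x y n
      = 2 * qNum q n * qAdd q x y (n - 1)) :=
  two_variable_difference_equations_general q hq1 B E G hB hE hG n x y
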